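/- Unification in the theory of Boolean groups (exclusive-or) is unitary for any single equation between linear terms: given a finite multiset equation x₁ * ⋯ * xₘ = y₁ * ⋯ * yₙ over distinct variables, there is a single substitution σ such that every unifier modulo the theory is an instance of σ. -/
import Mathlib


-- The free Boolean group (exclusive-or theory) on generators `V` is the
-- F₂-vector space `V →₀ ZMod 2`; `*` is `+`, the identity `mt` is `0`.

/-- Apply a substitution (a map from variables to elements of the free Boolean
group) to an element of the free Boolean group, by F₂-linearity. -/
noncomputable def applyS {V : Type} [DecidableEq V] (ρ : V → (V →₀ ZMod 2))
    (t : V →₀ ZMod 2) : V →₀ ZMod 2 :=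
  t.sum fun x c => c • ρ x

/-- The identity substitution. -/
noncomputable def idS {V : Type} [DecidableEq V] : V → (V →₀ ZMod 2) :=
  fun v => Finsupp.single v 1

lemma applyS_eq_total {V : Type} [DecidableEq V] (ρ : V → (V →₀ ZMod 2))
    (t : V →₀ ZMod 2) : applyS ρ t = Finsupp.linearCombination (ZMod 2) ρ t := by
  rw [Finsupp.linearCombination_apply]; rfl

lemma applyS_single {V : Type} [DecidableEq V] (ρ : V → (V →₀ ZMod 2)) (x : V) :
    applyS ρ (Finsupp.single x 1) = ρ x := by
  simp [applyS_eq_total]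

lemma applyS_sum {V : Type} [DecidableEq V] (ρ : V → (V →₀ ZMod 2)) (A : Finset V) :
    applyS ρ (∑ x ∈ A, Finsupp.single x (1 : ZMod 2)) = ∑ x ∈ A, ρ x := by
  simp [applyS_eq_total, map_sum]

lemma addself {V : Type} (g : V →₀ ZMod 2) : g + g = 0 := by
  ext a; simp [CharTwo.add_self_eq_zero]

lemma key {V : Type} [DecidableEq V] (f : V → (V →₀ ZMod 2)) (A B : Finset V) :
    (∑ x ∈ A, f x = ∑ x ∈ B, f x) ↔ (∑ x ∈ (A \ B) ∪ (B \ A), f x = 0) := by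
  have hd : Disjoint (A \ B) (B \ A) := disjoint_sdiff_sdiff
  rw [Finset.sum_union hd]
  have hA : ∑ x ∈ A, f x = ∑ x ∈ A \ B, f x + ∑ x ∈ A ∩ B, f x := by
    rw [← Finset.sum_inter_add_sum_sdiff A B f]; abel
  have hB : ∑ x ∈ B, f x = ∑ x ∈ B \ A, f x + ∑ x ∈ A ∩ B, f x := by
    rw [← Finset.sum_inter_add_sum_sdiff B A f, Finset.inter_comm]; abel
  rw [hA, hB, add_left_inj]
  constructor
  · intro h; rw [h, addself]
  · intro h
    have := congrArg (· + ∑ x ∈ B \ A, f x) h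
    simp only [add_assoc, addself, add_zero, zero_add] at this
    exact this


/-- Unification in Boolean groups is unitary for any single equation between
linear terms x₁ * ⋯ * xₘ =? y₁ * ⋯ * yₙ over distinct variables: there is a
single substitution σ of which every unifier is an instance. -/
theorem stmt5 {V : Type} [DecidableEq V] (A B : Finset V) :
    ∃ σ : V → (V →₀ ZMod 2),
      applyS σ (∑ x ∈ A, Finsupp.single x (1 : ZMod 2)) =
        applyS σ (∑ y ∈ B, Finsupp.single y 1) ∧
      ∀ ρ : V → (V →₀ ZMod 2),
        applyS ρ (∑ x ∈ A, Finsupp.single x (1 : ZMod 2)) =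
          applyS ρ (∑ y ∈ B, Finsupp.single y 1) →
        ∃ η, ∀ w, applyS η (σ w) = ρ w := by
  classical
  set S := (A \ B) ∪ (B \ A) with hSdef
  by_cases hS : S.Nonempty
  · obtain ⟨v, hv⟩ := hS
    refine ⟨fun w => if w = v then ∑ u ∈ S.erase v, Finsupp.single u 1
      else Finsupp.single w 1, ?_, ?_⟩
    · rw [applyS_sum, applyS_sum, key, ← hSdef]
      rw [← Finset.add_sum_erase S _ hv]
      have h1 : ∑ x ∈ S.erase v,
          (if x = v then ∑ u ∈ S.erase v, Finsupp.single u (1 : ZMod 2)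
            else Finsupp.single x 1) = ∑ u ∈ S.erase v, Finsupp.single u 1 := by
        refine Finset.sum_congr rfl fun x hx => ?_
        rw [if_neg (Finset.mem_erase.mp hx).1]
      rw [h1, if_pos rfl, addself]
    · intro ρ h
      rw [applyS_sum, applyS_sum, key, ← hSdef] at h
      refine ⟨ρ, fun w => ?_⟩
      by_cases hw : w = v
      · subst hw
        dsimp only
        rw [if_pos rfl, applyS_sum]
        rw [← Finset.add_sum_erase S ρ hv] at h
        have := congrArg (ρ w + ·) h
        simp only [← add_assoc, addself, zero_add, add_zero] at this
        exact this
      · dsimp only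
        rw [if_neg hw, applyS_single]
  · refine ⟨idS, ?_, fun ρ h => ⟨ρ, fun w => applyS_single ρ w⟩⟩
    rw [applyS_sum, applyS_sum, key, ← hSdef, Finset.not_nonempty_iff_eq_empty.mp hS,
      Finset.sum_empty]
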